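/- Let C ≥ 1 be a real constant and let E₂, E₁, F, G : [0, ∞) → [0, ∞) be continuous functions such that for all 0 ≤ τ₁ ≤ τ₂: (i) F(τ₂) ≤ C F(τ₁); (ii) G(τ₂) ≤ C G(τ₁); (iii) E₂(τ₂) + (1/C) ∫_{τ₁}^{τ₂} E₁(τ) dτ ≤ E₂(τ₁) + C F(τ₁); and (iv) E₁(τ₂) + (1/C) ∫_{τ₁}^{τ₂} F(τ) dτ ≤ E₁(τ₁) + C G(τ₁). Then there exists a constant C′, depending only on C, such that for all τ > 0: F(τ) ≤ C′ ( (E₂(0) + F(0))/τ² + G(0)/τ ). -/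
import Mathlib


open MeasureTheory Set

set_option maxHeartbeats 1000000

/-- **Hierarchy-to-decay lemma (one level).**
Given continuous nonnegative `E₂, E₁, F, G` on `[0,∞)` satisfying, for all
`0 ≤ τ₁ ≤ τ₂`, the boundedness statements `F(τ₂) ≤ C F(τ₁)`, `G(τ₂) ≤ C G(τ₁)`
and the hierarchy estimates
`E₂(τ₂) + (1/C)∫_{τ₁}^{τ₂} E₁ ≤ E₂(τ₁) + C F(τ₁)` and
`E₁(τ₂) + (1/C)∫_{τ₁}^{τ₂} F ≤ E₁(τ₁) + C G(τ₁)`,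
there is `C'` depending only on `C` with
`F(τ) ≤ C' ((E₂(0) + F(0))/τ² + G(0)/τ)` for all `τ > 0`. -/

private lemma exists_mul_le_integral (f : ℝ → ℝ) (a b : ℝ) (hab : a ≤ b)
    (hf : ContinuousOn f (Icc a b)) :
    ∃ s ∈ Icc a b, (b - a) * f s ≤ ∫ x in a..b, f x := by
  obtain ⟨s, hs, hmin⟩ := isCompact_Icc.exists_isMinOn (nonempty_Icc.mpr hab) hf
  refine ⟨s, hs, ?_⟩
  have hf' : ContinuousOn f (uIcc a b) := by rwa [uIcc_of_le hab]
  calc (b - a) * f s = ∫ _ in a..b, f s := by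
        rw [intervalIntegral.integral_const, smul_eq_mul]
    _ ≤ ∫ x in a..b, f x := by
        exact intervalIntegral.integral_mono_on hab intervalIntegrable_const
          hf'.intervalIntegrable (fun x hx => hmin hx)

theorem hierarchy_to_decay
    (C : ℝ) (hC : 1 ≤ C)
    (E₂ E₁ F G : ℝ → ℝ)
    (hE₂c : ContinuousOn E₂ (Ici 0)) (hE₁c : ContinuousOn E₁ (Ici 0))
    (hFc : ContinuousOn F (Ici 0)) (hGc : ContinuousOn G (Ici 0))
    (hE₂0 : ∀ τ, 0 ≤ τ → 0 ≤ E₂ τ) (hE₁0 : ∀ τ, 0 ≤ τ → 0 ≤ E₁ τ)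
    (hF0 : ∀ τ, 0 ≤ τ → 0 ≤ F τ) (hG0 : ∀ τ, 0 ≤ τ → 0 ≤ G τ)
    (hFb : ∀ τ₁ τ₂, 0 ≤ τ₁ → τ₁ ≤ τ₂ → F τ₂ ≤ C * F τ₁)
    (hGb : ∀ τ₁ τ₂, 0 ≤ τ₁ → τ₁ ≤ τ₂ → G τ₂ ≤ C * G τ₁)
    (h₂ : ∀ τ₁ τ₂, 0 ≤ τ₁ → τ₁ ≤ τ₂ →
      E₂ τ₂ + (1/C) * ∫ τ in τ₁..τ₂, E₁ τ ≤ E₂ τ₁ + C * F τ₁)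
    (h₁ : ∀ τ₁ τ₂, 0 ≤ τ₁ → τ₁ ≤ τ₂ →
      E₁ τ₂ + (1/C) * ∫ τ in τ₁..τ₂, F τ ≤ E₁ τ₁ + C * G τ₁) :
    ∃ C' : ℝ, ∀ τ, 0 < τ →
      F τ ≤ C' * ((E₂ 0 + F 0)/τ^2 + G 0/τ) := by

  have hC0 : (0:ℝ) < C := lt_of_lt_of_le one_pos hC
  refine ⟨8*C^3*(1+C+C^2) + 2*C^4, ?_⟩
  intro τ hτ
  have hX0 : 0 ≤ E₂ 0 + F 0 := add_nonneg (hE₂0 0 le_rfl) (hF0 0 le_rfl)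
  have hG00 : 0 ≤ G 0 := hG0 0 le_rfl
  -- E₂ is bounded by the data
  have hE₂b : ∀ t, 0 ≤ t → E₂ t ≤ E₂ 0 + C * F 0 := by
    intro t ht
    have h := h₂ 0 t le_rfl ht
    have hnn : (0:ℝ) ≤ ∫ u in (0:ℝ)..t, E₁ u :=
      intervalIntegral.integral_nonneg ht (fun u hu => hE₁0 u hu.1)
    nlinarith [mul_nonneg (le_of_lt (one_div_pos.mpr hC0)) hnn]
  set a := τ/4 with ha_def
  set b := τ/2 with hb_def
  have ha0 : 0 ≤ a := by positivity
  have hb0 : 0 ≤ b := by positivity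
  have hab : a ≤ b := by rw [ha_def, hb_def]; linarith
  have hbt : b ≤ τ := by rw [hb_def]; linarith
  set R := E₂ 0 + C * F 0 + C^2 * F 0 with hR_def
  -- bound on ∫_a^b E₁
  have hI : ∫ x in a..b, E₁ x ≤ C * R := by
    have h := h₂ a b ha0 hab
    have h1 : (1/C) * ∫ x in a..b, E₁ x ≤ R := by
      have := hE₂b a ha0
      have := hFb 0 a le_rfl ha0
      have := hE₂0 b hb0
      nlinarith
    calc ∫ x in a..b, E₁ x = C * ((1/C) * ∫ x in a..b, E₁ x) := by
          field_simp
      _ ≤ C * R := mul_le_mul_of_nonneg_left h1 hC0.le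
  -- pigeonhole: point s₁ in [a,b] with small E₁
  obtain ⟨s₁, hs₁, hp₁⟩ := exists_mul_le_integral E₁ a b hab
    (hE₁c.mono (fun x hx => le_trans ha0 hx.1))
  have hs₁0 : 0 ≤ s₁ := le_trans ha0 hs₁.1
  have hba : b - a = τ/4 := by rw [ha_def, hb_def]; ring
  have hE₁s₁ : (τ/4) * E₁ s₁ ≤ C * R := by rw [← hba]; exact le_trans hp₁ hI
  -- from level 1: bound ∫_{s₁}^{τ} F
  have hs₁τ : s₁ ≤ τ := le_trans hs₁.2 hbt
  have hJ : ∫ x in s₁..τ, F x ≤ C * (E₁ s₁ + C^2 * G 0) := by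
    have h := h₁ s₁ τ hs₁0 hs₁τ
    have hG := hGb 0 s₁ le_rfl hs₁0
    have h1 : (1/C) * ∫ x in s₁..τ, F x ≤ E₁ s₁ + C^2 * G 0 := by
      have := hE₁0 τ (le_of_lt hτ)
      nlinarith
    calc ∫ x in s₁..τ, F x = C * ((1/C) * ∫ x in s₁..τ, F x) := by field_simp
      _ ≤ C * (E₁ s₁ + C^2 * G 0) := mul_le_mul_of_nonneg_left h1 hC0.le
  -- the integral over [b, τ] is at most the one over [s₁, τ]
  have hs₁b : s₁ ≤ b := hs₁.2
  have hint1 : IntervalIntegrable F volume s₁ b := by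
    apply ContinuousOn.intervalIntegrable
    apply hFc.mono
    rw [uIcc_of_le hs₁b]
    exact fun x hx => le_trans hs₁0 hx.1
  have hint2 : IntervalIntegrable F volume b τ := by
    apply ContinuousOn.intervalIntegrable
    apply hFc.mono
    rw [uIcc_of_le hbt]
    exact fun x hx => le_trans hb0 hx.1
  have hsplit : (∫ x in s₁..b, F x) + ∫ x in b..τ, F x = ∫ x in s₁..τ, F x :=
    intervalIntegral.integral_add_adjacent_intervals hint1 hint2
  have hnn1 : (0:ℝ) ≤ ∫ x in s₁..b, F x :=
    intervalIntegral.integral_nonneg hs₁b (fun u hu => hF0 u (le_trans hs₁0 hu.1))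
  have hJ2 : ∫ x in b..τ, F x ≤ C * (E₁ s₁ + C^2 * G 0) := by linarith
  -- pigeonhole on [b, τ]
  obtain ⟨s₂, hs₂, hp₂⟩ := exists_mul_le_integral F b τ hbt
    (hFc.mono (fun x hx => le_trans hb0 hx.1))
  have hs₂0 : 0 ≤ s₂ := le_trans hb0 hs₂.1
  have htb : τ - b = τ/2 := by rw [hb_def]; ring
  have hFs₂ : (τ/2) * F s₂ ≤ C * (E₁ s₁ + C^2 * G 0) := by
    rw [← htb]; exact le_trans hp₂ hJ2
  -- final uniform-boundedness step
  have hFτ : F τ ≤ C * F s₂ := hFb s₂ τ hs₂0 hs₂.2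
  -- combine
  have hE₁s₁nn : 0 ≤ E₁ s₁ := hE₁0 s₁ hs₁0
  have hFs₂nn : 0 ≤ F s₂ := hF0 s₂ hs₂0
  clear h₁ h₂ hI hJ hJ2 hp₁ hp₂ hsplit hnn1 hint1 hint2 hE₂b hFb hGb hE₂c hE₁c hFc hGc
  clear_value R a b
  have k1 : τ * E₁ s₁ ≤ 4*C*R := by linarith
  have k2 : τ^2 * F s₂ ≤ 2*C*(τ*E₁ s₁) + 2*C^3*(τ*G 0) := by
    nlinarith [mul_le_mul_of_nonneg_left hFs₂ hτ.le]
  have k3 : τ^2 * F τ ≤ τ^2 * (C * F s₂) := mul_le_mul_of_nonneg_left hFτ (sq_nonneg τ)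
  have k4 := mul_le_mul_of_nonneg_left k2 hC0.le
  have k5 : 2*C^2*(τ*E₁ s₁) ≤ 2*C^2*(4*C*R) :=
    mul_le_mul_of_nonneg_left k1 (by positivity)
  have key : τ^2 * F τ ≤ 8 * C^3 * R + 2 * C^4 * (τ * G 0) := by nlinarith
  have hR : R ≤ (1 + C + C^2) * (E₂ 0 + F 0) := by
    rw [hR_def]
    nlinarith [hE₂0 0 le_rfl, hF0 0 le_rfl]
  have hτ2 : (0:ℝ) < τ^2 := by positivity
  have h6 : F τ ≤ (8*C^3*R + 2*C^4*(τ*G 0))/τ^2 := by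
    rw [le_div_iff₀ hτ2]; linarith
  have h7 : (8*C^3*R + 2*C^4*(τ*G 0))/τ^2 = 8*C^3*R/τ^2 + 2*C^4*(G 0)/τ := by
    field_simp
  have n1 : 8*C^3*R ≤ (8*C^3*(1+C+C^2) + 2*C^4)*(E₂ 0 + F 0) := by
    linarith [mul_le_mul_of_nonneg_left hR (show (0:ℝ) ≤ 8*C^3 by positivity),
      mul_nonneg (show (0:ℝ) ≤ 2*C^4 by positivity) hX0]
  have n2 : 2*C^4*(G 0) ≤ (8*C^3*(1+C+C^2) + 2*C^4)*(G 0) := by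
    linarith [mul_nonneg (show (0:ℝ) ≤ 8*C^3*(1+C+C^2) by positivity) hG00]
  have t1 : 8*C^3*R/τ^2 ≤ ((8*C^3*(1+C+C^2) + 2*C^4)*(E₂ 0 + F 0))/τ^2 :=
    div_le_div_of_nonneg_right n1 hτ2.le
  have t2 : 2*C^4*(G 0)/τ ≤ ((8*C^3*(1+C+C^2) + 2*C^4)*(G 0))/τ :=
    div_le_div_of_nonneg_right n2 hτ.le
  have := h6.trans_eq h7
  rw [mul_add]
  calc F τ ≤ 8*C^3*R/τ^2 + 2*C^4*(G 0)/τ := this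
    _ ≤ ((8*C^3*(1+C+C^2) + 2*C^4)*(E₂ 0 + F 0))/τ^2
        + ((8*C^3*(1+C+C^2) + 2*C^4)*(G 0))/τ := add_le_add t1 t2
    _ = (8*C^3*(1+C+C^2) + 2*C^4) * ((E₂ 0 + F 0)/τ^2)
        + (8*C^3*(1+C+C^2) + 2*C^4) * (G 0/τ) := by ring
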